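/- arXiv:1012.4370 — 4 statements merged into one kernel-verified Lean document; each statement's English description precedes it below -/
import Mathlib

section
/- Let L be a countable first-order language and let K be a class of finitely generated L-structures closed under isomorphism having HP, JEP, AP and satisfying condition (*) (for every n, only finitely many quantifier-free types of n-tuples are realized in members of K), and let M be the Fraïssé limit of K. Then the complete theory of M has quantifier elimination: every L-formula φ(x̄) is semantically equivalent modulo Th(M) to a quantifier-free L-formula in the same free variables. -/
open FirstOrder Language CategoryTheory

universe u v w

/-!
In an ultrahomogeneous structure, tuples with the same quantifier-free type are conjugate by an
automorphism, so the set defined by any formula `φ` is a union of quantifier-free types. By (*)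
and `Age(M) = K` only finitely many such types are realized in `M`, and any two of them are
separated by a quantifier-free formula; so each realized type is isolated by a finite
conjunction, and `φ` is equivalent in `M` to a finite disjunction of these. The universal closure
of this equivalence is a sentence of `Th(M)`.
-/

open Set

theorem BooleanSubalgebra.preimage_mem_of_separating {X Y : Type*}
    (B : BooleanSubalgebra (Set X)) (f : X → Y) (hf : (range f).Finite)
    (hsat : ∀ s ∈ B, ∀ x y, f x = f y → x ∈ s → y ∈ s)
    (hsep : ∀ x y, f x ≠ f y → ∃ s ∈ B, x ∈ s ∧ y ∉ s) (P : Set Y) :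
    f ⁻¹' P ∈ B := by
  have fiber_mem : ∀ x, f ⁻¹' {f x} ∈ B := by
    intro x
    have : ∀ q ∈ range f \ {f x}, ∃ s ∈ B, x ∈ s ∧ ∀ y, f y = q → y ∉ s := by
      rintro _ ⟨⟨y, rfl⟩, hy⟩
      obtain ⟨s, hs, hxs, hys⟩ := hsep x y (Ne.symm hy)
      exact ⟨s, hs, hxs, fun z hz hzs => hys (hsat s hs z y hz hzs)⟩
    choose! t htB hxt hyt using this
    convert B.biInf_mem hf.sdiff htB using 1
    ext y
    simp only [mem_preimage, mem_singleton_iff, iInf_eq_iInter, mem_iInter]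
    refine ⟨fun hy q hq => hsat _ (htB q hq) x y hy.symm (hxt q hq), fun hy => ?_⟩
    by_contra hne
    exact hyt (f y) ⟨mem_range_self y, hne⟩ y rfl (hy _ ⟨mem_range_self y, hne⟩)
  have hP : f ⁻¹' P = ⨆ q ∈ range f ∩ P, f ⁻¹' {q} := by
    ext x
    simp
  rw [hP]
  exact B.biSup_mem (hf.subset inter_subset_left) (by rintro _ ⟨⟨x, rfl⟩, -⟩; exact fiber_mem x)

namespace FirstOrder.Language

open Structure Substructure

variable {L : Language.{u, v}} {M N : Type*} [L.Structure M] [L.Structure N] {α : Type*}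

variable (L) in
def qfType (a : α → M) : Set (L.Formula α) :=
  {φ | φ.IsQF ∧ φ.Realize a}

theorem qfType_comp_embedding (f : M ↪[L] N) (a : α → M) :
    qfType L (f ∘ a) = qfType L a := by
  ext φ
  refine and_congr_right fun hφ => ?_
  have h := hφ.realize_embedding f (v := a) (xs := (default : Fin 0 → M))
  rwa [Subsingleton.elim (f ∘ (default : Fin 0 → M)) default] at h

section qfType_eq

variable {a : α → M} {b : α → N} (h : qfType L a = qfType L b)
include h

theorem realize_iff_of_qfType_eq {φ : L.Formula α} (hφ : φ.IsQF) :
    φ.Realize a ↔ φ.Realize b :=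
  ⟨fun ha => (h ▸ ⟨hφ, ha⟩ : φ ∈ qfType L b).2, fun hb => (h ▸ ⟨hφ, hb⟩ : φ ∈ qfType L a).2⟩

theorem term_realize_eq_iff_of_qfType_eq (t s : L.Term α) :
    t.realize a = s.realize a ↔ t.realize b = s.realize b := by
  simpa only [Formula.realize_equal] using
    realize_iff_of_qfType_eq h (φ := t.equal s) (BoundedFormula.IsAtomic.equal _ _).isQF

theorem relMap_iff_of_qfType_eq {k : ℕ} (R : L.Relations k) (ts : Fin k → L.Term α) :
    RelMap R (fun i => (ts i).realize a) ↔ RelMap R (fun i => (ts i).realize b) := by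
  simpa only [Formula.realize_rel] using
    realize_iff_of_qfType_eq h (φ := R.formula ts) (BoundedFormula.IsAtomic.rel _ _).isQF

theorem exists_embedding_closure_of_qfType_eq :
    ∃ e : closure L (range a) ↪[L] N, ∀ i, e ⟨a i, subset_closure (mem_range_self i)⟩ = b i := by
  have hterm : ∀ x : closure L (range a), ∃ t : L.Term α, t.realize a = x := by
    rintro ⟨x, hx⟩
    obtain ⟨t, rfl⟩ := mem_closure_iff_exists_term.1 hx
    exact ⟨t.relabel fun y => y.2.choose, by
      rw [Term.realize_relabel]; congr 1; funext y; exact y.2.choose_spec⟩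
  choose tm htm using hterm
  -- `t(a)` is sent to `t(b)`; agreement on atomic formulas makes this a well-defined embedding.
  let e : closure L (range a) ↪[L] N :=
    { toFun x := (tm x).realize b
      inj' x y hxy := Subtype.ext <| by
        rw [← htm x, ← htm y]; exact (term_realize_eq_iff_of_qfType_eq h _ _).2 hxy
      map_fun' {k} F xs := by
        change _ = (Term.func F fun i => tm (xs i)).realize b
        refine (term_realize_eq_iff_of_qfType_eq h _ _).1 ?_
        simp only [htm, Term.realize_func]
        rfl
      map_rel' {k} R xs := by
        change RelMap R (fun i => (tm (xs i)).realize b) ↔ RelMap R fun i => (xs i : M)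
        rw [← relMap_iff_of_qfType_eq h]
        simp only [htm] }
  refine ⟨e, fun i => ?_⟩
  exact (term_realize_eq_iff_of_qfType_eq h _ (Term.var i)).1 (htm _)

end qfType_eq

theorem IsUltrahomogeneous.exists_equiv_comp_eq_of_qfType_eq [Finite α]
    (hM : L.IsUltrahomogeneous M) {a b : α → M} (h : qfType L a = qfType L b) :
    ∃ g : M ≃[L] M, g ∘ a = b := by
  obtain ⟨e, he⟩ := exists_embedding_closure_of_qfType_eq h
  obtain ⟨g, rfl⟩ := hM _ (fg_closure (finite_range a)) e
  exact ⟨g, funext he⟩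

theorem IsUltrahomogeneous.realize_iff_of_qfType_eq [Finite α]
    (hM : L.IsUltrahomogeneous M) {a b : α → M} (h : qfType L a = qfType L b)
    (φ : L.Formula α) : φ.Realize a ↔ φ.Realize b := by
  obtain ⟨g, rfl⟩ := hM.exists_equiv_comp_eq_of_qfType_eq h
  exact (StrongHomClass.realize_formula g φ).symm

variable (L M α) in
def qfDefinableSets : BooleanSubalgebra (Set (α → M)) where
  carrier := {s | ∃ φ : L.Formula α, φ.IsQF ∧ {v | φ.Realize v} = s}
  supClosed' := by
    rintro _ ⟨φ, hφ, rfl⟩ _ ⟨ψ, hψ, rfl⟩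
    exact ⟨φ ⊔ ψ, hφ.sup hψ, by ext; simp⟩
  infClosed' := by
    rintro _ ⟨φ, hφ, rfl⟩ _ ⟨ψ, hψ, rfl⟩
    exact ⟨φ ⊓ ψ, hφ.inf hψ, by ext; simp⟩
  compl_mem' := by
    rintro _ ⟨φ, hφ, rfl⟩
    exact ⟨φ.not, hφ.not, by ext; simp⟩
  bot_mem' := ⟨⊥, BoundedFormula.isQF_bot, by ext; simp⟩

theorem mem_of_qfType_eq {s : Set (α → M)} (hs : s ∈ qfDefinableSets L M α) {a b : α → M}
    (h : qfType L a = qfType L b) (ha : a ∈ s) : b ∈ s := by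
  obtain ⟨φ, hφ, rfl⟩ := hs
  exact (realize_iff_of_qfType_eq h hφ).1 ha

theorem exists_mem_qfDefinableSets_of_qfType_ne {a b : α → M} (h : qfType L a ≠ qfType L b) :
    ∃ s ∈ qfDefinableSets L M α, a ∈ s ∧ b ∉ s := by
  by_contra! hab
  have hqf : ∀ φ : L.Formula α, φ.IsQF → φ.Realize a → φ.Realize b :=
    fun φ hφ => hab _ ⟨φ, hφ, rfl⟩
  refine h (Set.ext fun φ => ⟨fun ⟨hφ, ha⟩ => ⟨hφ, hqf φ hφ ha⟩, fun ⟨hφ, hb⟩ => ⟨hφ, ?_⟩⟩)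
  by_contra ha
  exact hqf φ.not hφ.not ha hb

theorem IsUltrahomogeneous.exists_isQF_realize_iff [Finite α] (hM : L.IsUltrahomogeneous M)
    (hfin : (range (qfType L : (α → M) → Set (L.Formula α))).Finite) (φ : L.Formula α) :
    ∃ ψ : L.Formula α, ψ.IsQF ∧ ∀ v : α → M, φ.Realize v ↔ ψ.Realize v := by
  have hφ : {v : α → M | φ.Realize v} = qfType L ⁻¹' (qfType L '' {v : α → M | φ.Realize v}) := by
    ext v
    exact ⟨fun hv => ⟨v, hv, rfl⟩, fun ⟨w, hw, hwv⟩ => (hM.realize_iff_of_qfType_eq hwv φ).1 hw⟩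
  obtain ⟨ψ, hψ, hψφ⟩ : {v : α → M | φ.Realize v} ∈ qfDefinableSets L M α := by
    rw [hφ]
    exact (qfDefinableSets L M α).preimage_mem_of_separating _ hfin
      (fun s hs _ _ => mem_of_qfType_eq hs) (fun _ _ => exists_mem_qfDefinableSets_of_qfType_ne) _
  exact ⟨ψ, hψ, fun v => (Set.ext_iff.1 hψφ v).symm⟩

theorem exists_mem_age_qfType_eq [Finite α] (a : α → M) :
    ∃ N ∈ L.age M, ∃ b : α → N, qfType L b = qfType L a := by
  let c := closure L (range a)
  refine ⟨⟨c, inferInstance⟩, ⟨(fg_iff_structure_fg c).1 (fg_closure (finite_range a)),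
    ⟨c.subtype⟩⟩, fun i => ⟨a i, subset_closure (mem_range_self i)⟩, ?_⟩
  exact (qfType_comp_embedding c.subtype _).symm

theorem realize_of_forall_realize_completeTheory [Finite α] {φ : L.Formula α}
    (h : ∀ v : α → M, φ.Realize v) (N : (L.completeTheory M).ModelType) (v : α → N) :
    φ.Realize v := by
  have hM : M ⊨ (φ.relabel (Sum.inr : α → Empty ⊕ α)).iAlls α :=
    BoundedFormula.realize_iAlls.2 fun w => by simpa [Formula.realize_relabel] using h w
  have hN := BoundedFormula.realize_iAlls.1 ((L.completeTheory M).realize_sentence_of_mem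
    (mem_completeTheory.2 hM)) v
  simpa [Formula.realize_relabel] using hN

end FirstOrder.Language

open FirstOrder.Language

theorem statement2_general (L : FirstOrder.Language.{u, v})
    [Countable (Σ l, L.Functions l)]
    (K : Set (Bundled.{w} L.Structure))
    (K_star : ∀ n : ℕ,
      { p : Set (L.Formula (Fin n)) |
        ∃ N ∈ K, ∃ a : Fin n → (N : Type w),
          p = { φ : L.Formula (Fin n) | φ.IsQF ∧ φ.Realize a } }.Finite)
    (M : Type w) [L.Structure M] [Countable M]
    (M_lim : IsFraisseLimit K M) :
    ∀ (n : ℕ) (φ : L.Formula (Fin n)), ∃ ψ : L.Formula (Fin n), ψ.IsQF ∧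
      ∀ (N : (L.completeTheory M).ModelType) (v : Fin n → N),
        φ.Realize v ↔ ψ.Realize v := by
  intro n φ
  have hfin : (range (qfType L : (Fin n → M) → Set (L.Formula (Fin n)))).Finite := by
    refine (K_star n).subset ?_
    rintro _ ⟨a, rfl⟩
    obtain ⟨N, hN, b, hb⟩ := exists_mem_age_qfType_eq (L := L) a
    exact ⟨N, M_lim.age ▸ hN, b, hb.symm⟩
  obtain ⟨ψ, hψ, hφψ⟩ := M_lim.ultrahomogeneous.exists_isQF_realize_iff hfin φ
  refine ⟨ψ, hψ, fun N v => ?_⟩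
  exact Formula.realize_iff.1 <| realize_of_forall_realize_completeTheory
    (φ := φ.iff ψ) (fun w => Formula.realize_iff.2 (hφψ w)) N v

/-- If `K` is a class of finitely generated structures for a countable language,
closed under isomorphism, with HP, JEP, AP and (*), and `M` is the Fraïssé limit of `K`, then the
complete theory of `M` has quantifier elimination: every formula `φ(x̄)` is semantically
equivalent modulo `Th(M)` to a quantifier-free formula in the same free variables. -/
theorem statement2 (L : FirstOrder.Language.{u, v})
    [Countable (Σ l, L.Functions l)] [Countable (Σ l, L.Relations l)]
    (K : Set (Bundled.{w} L.Structure))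
    (K_fg : ∀ M : Bundled.{w} L.Structure, M ∈ K → Structure.FG L M)
    (K_iso : ∀ M N : Bundled.{w} L.Structure, Nonempty (M ≃[L] N) → M ∈ K → N ∈ K)
    (K_HP : Hereditary K) (K_JEP : JointEmbedding K) (K_AP : Amalgamation K)
    (K_star : ∀ n : ℕ,
      { p : Set (L.Formula (Fin n)) |
        ∃ N ∈ K, ∃ a : Fin n → (N : Type w),
          p = { φ : L.Formula (Fin n) | φ.IsQF ∧ φ.Realize a } }.Finite)
    (M : Type w) [L.Structure M] [Countable M]
    (M_lim : IsFraisseLimit K M) :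
    ∀ (n : ℕ) (φ : L.Formula (Fin n)), ∃ ψ : L.Formula (Fin n), ψ.IsQF ∧
      ∀ (N : (L.completeTheory M).ModelType) (v : Fin n → N),
        φ.Realize v ↔ ψ.Realize v :=
  statement2_general L K K_star M M_lim
end

section
/- The theory T_E has TP2, the tree property of the second kind, witnessed by the formula φ(x; y, u, v) = E_2(x y, u v): there exist a model M of T_E and triples (ā^i_j)_{i,j<ω} of elements of M such that (i) for every i < ω and all j ≠ k < ω, M satisfies ¬∃x (φ(x, ā^i_j) ∧ φ(x, ā^i_k)), and (ii) for every function η : ω → ω and every m < ω, M satisfies ∃x ⋀_{i<m} φ(x, ā^i_{η(i)}). -/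
open FirstOrder Language CategoryTheory

/-- The one-sorted language `L_E` with, for each `n ≥ 1`, a single relation symbol `E_n`
of arity `2n` (here `E_{n+1}` has arity `(n+1) + (n+1)`), and no other symbols. -/
def LangE : FirstOrder.Language :=
  ⟨fun _ => Empty, fun k => { n : ℕ // k = (n + 1) + (n + 1) }⟩

/-- The relation symbol `E_{n+1}`, of arity `(n+1) + (n+1)`. -/
def ESym (n : ℕ) : LangE.Relations ((n + 1) + (n + 1)) := ⟨n, rfl⟩

/-- The interpretation of `E_{n+1}` in an `L_E`-structure `M`, regarded as a binary
relation on `(n+1)`-tuples of `M`. -/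
def ERel {M : Type*} [LangE.Structure M] (n : ℕ) (a b : Fin (n + 1) → M) : Prop :=
  Structure.RelMap (ESym n) (Fin.append a b)

/-- An `L_E`-structure satisfies `T⁰_E` if each `E_n` is an equivalence relation on `n`-tuples
and the `n`-tuples containing a repeated entry form exactly one `E_n`-equivalence class. -/
def IsT0Model (M : Type*) [LangE.Structure M] : Prop :=
  ∀ n : ℕ, Equivalence (ERel (M := M) n) ∧
    ∀ a b : Fin (n + 1) → M, ¬ Function.Injective a →
      (ERel n a b ↔ ¬ Function.Injective b)

/-- `K_E` is the class of all finite `L_E`-structures satisfying `T⁰_E`. -/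
def KE : Set (Bundled LangE.Structure) :=
  { M | Finite M ∧ IsT0Model M }

instance : IsEmpty ((l : ℕ) × LangE.Functions l) := ⟨fun x => Empty.elim x.2⟩

/-!
Take `M = M_E` itself. The whole argument rests on a one-point extension property of `M_E`:
over a finite substructure `S`, and for prescribed injective pairs `(u, v)` attached to some
points `y ∈ S`, there is a new point `z` with `E₂(z y, u v)` for those `y`, while every pair
`(x, z)` with `x ∈ S` lies in an `E₂`-class not met by pairs from `S`. Such a `z` exists because
the one-point extension of `S` with exactly these classes is a finite model of `T⁰_E`, hence
embeds into `M_E` over `S` by ultrahomogeneity.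

Iterating the second clause gives an injective sequence `c` whose pairs `(c (2j), c (2j+1))` lie
in pairwise distinct `E₂`-classes; put `ā^i_j = (c (2i), c (2j), c (2j+1))`. A row is
2-inconsistent by transitivity of `E₂`, and a path `η` up to `m` is consistent by the first
clause applied to the distinct points `c (2i)`, `i < m`.
-/

open Function

theorem Fin.comp_append {α β : Type*} {m n : ℕ} (g : α → β) (a : Fin m → α) (b : Fin n → α) :
    g ∘ Fin.append a b = Fin.append (g ∘ a) (g ∘ b) := by
  funext i
  cases i using Fin.addCases <;> simp

theorem Matrix.comp_vec2 {α β : Type*} (φ : α → β) (p q : α) : φ ∘ ![p, q] = ![φ p, φ q] :=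
  (FinVec.map_eq φ ![p, q]).symm

section ERel

variable {M N : Type*} [LangE.Structure M] [LangE.Structure N]

theorem eRel_comp_embedding_iff (f : N ↪[LangE] M) {n : ℕ} (a b : Fin (n + 1) → N) :
    ERel n (f ∘ a) (f ∘ b) ↔ ERel n a b := by
  unfold ERel
  rw [← Fin.comp_append]
  exact f.map_rel _ _

def embeddingOfERel (f : N ↪ M)
    (hf : ∀ n (a b : Fin (n + 1) → N), ERel n (f ∘ a) (f ∘ b) ↔ ERel n a b) : N ↪[LangE] M where
  toEmbedding := f
  map_fun' g := Empty.elim g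
  map_rel' := by
    rintro _ ⟨n, rfl⟩ x
    rw [← Fin.append_castAdd_natAdd (f := x), Fin.comp_append]
    exact hf n _ _

end ERel

section Labels

variable {B : Type*} {β : ℕ → Type*}

abbrev structureOfLabels (lab : ∀ n, (Fin (n + 1) → B) → β n) : LangE.Structure B where
  funMap g := Empty.elim g
  RelMap r x := lab r.1 (fun i => x (Fin.cast r.2.symm (Fin.castAdd _ i))) =
    lab r.1 (fun i => x (Fin.cast r.2.symm (Fin.natAdd _ i)))

theorem eRel_structureOfLabels_iff (lab : ∀ n, (Fin (n + 1) → B) → β n) {n : ℕ}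
    (a b : Fin (n + 1) → B) :
    @ERel B (structureOfLabels lab) n a b ↔ lab n a = lab n b := by
  show lab n (fun i => Fin.append a b (Fin.cast rfl (Fin.castAdd _ i))) =
    lab n (fun i => Fin.append a b (Fin.cast rfl (Fin.natAdd _ i))) ↔ _
  simp only [Fin.cast_eq_self, Fin.append_left, Fin.append_right]

theorem isT0Model_structureOfLabels (lab : ∀ n, (Fin (n + 1) → B) → β n) (bot : ∀ n, β n)
    (hbot : ∀ n t, lab n t = bot n ↔ ¬ Injective t) :
    @IsT0Model B (structureOfLabels lab) := by
  let _ : LangE.Structure B := structureOfLabels lab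
  intro n
  have hE : ∀ a b, ERel n a b ↔ lab n a = lab n b := eRel_structureOfLabels_iff lab
  refine ⟨⟨fun a => (hE a a).2 rfl, fun h => (hE _ _).2 ((hE _ _).1 h).symm,
    fun h h' => (hE _ _).2 (((hE _ _).1 h).trans ((hE _ _).1 h'))⟩, fun a b ha => ?_⟩
  rw [← hbot] at ha
  rw [hE, ← hbot, ha, eq_comm]

end Labels

section T0

variable {M : Type*} [LangE.Structure M]

open Classical in
noncomputable def eClass (n : ℕ) (a : Fin (n + 1) → M) : Option (Quot (ERel (M := M) n)) :=
  if Injective a then some (Quot.mk _ a) else none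

theorem IsT0Model.eRel_iff_eClass_eq (hM : IsT0Model M) {n : ℕ} (a b : Fin (n + 1) → M) :
    ERel n a b ↔ eClass n a = eClass n b := by
  have hrep := (hM n).2
  by_cases ha : Injective a <;> by_cases hb : Injective b <;>
    simp only [eClass, ha, hb, if_true, if_false, Option.some.injEq, reduceCtorEq, iff_false,
      iff_true, (hM n).1.quot_mk_eq_iff]
  · exact fun hab => (hrep b a hb).1 ((hM n).1.symm hab) ha
  · exact fun hab => (hrep a b ha).1 hab hb
  · exact (hrep a b ha).2 hb

theorem isT0Model_of_isFraisseLimit [Countable M] (h : IsFraisseLimit KE M) : IsT0Model M := by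
  have lift : ∀ {n} (a b c : Fin (n + 1) → M), ∃ (S : LangE.Substructure M)
      (a' b' c' : Fin (n + 1) → S), IsT0Model S ∧
        a = S.subtype ∘ a' ∧ b = S.subtype ∘ b' ∧ c = S.subtype ∘ c' := by
    intro n a b c
    let S := Substructure.closure LangE (Set.range a ∪ Set.range b ∪ Set.range c)
    have hS : Bundled.mk S ∈ KE := h.age ▸ age.fg_substructure (Substructure.fg_closure
      (((Set.finite_range a).union (Set.finite_range b)).union (Set.finite_range c)))
    exact ⟨S, fun i => ⟨a i, Substructure.subset_closure (by simp)⟩,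
      fun i => ⟨b i, Substructure.subset_closure (by simp)⟩,
      fun i => ⟨c i, Substructure.subset_closure (by simp)⟩, hS.2, rfl, rfl, rfl⟩
  intro n
  refine ⟨⟨fun a => ?_, fun {a b} hab => ?_, fun {a b c} hab hbc => ?_⟩, fun a b ha => ?_⟩
  · obtain ⟨S, a', -, -, hS, rfl, -, -⟩ := lift a a a
    exact (eRel_comp_embedding_iff _ _ _).2 ((hS n).1.refl a')
  · obtain ⟨S, a', b', -, hS, rfl, rfl, -⟩ := lift a b a
    rw [eRel_comp_embedding_iff] at hab ⊢
    exact (hS n).1.symm hab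
  · obtain ⟨S, a', b', c', hS, rfl, rfl, rfl⟩ := lift a b c
    rw [eRel_comp_embedding_iff] at hab hbc ⊢
    exact (hS n).1.trans hab hbc
  · obtain ⟨S, a', b', -, hS, rfl, rfl, -⟩ := lift a b a
    rw [S.subtype.injective.of_comp_iff] at ha
    rw [eRel_comp_embedding_iff, S.subtype.injective.of_comp_iff]
    exact (hS n).2 a' b' ha

end T0

section OnePointExtension

variable {M : Type*} [LangE.Structure M] (S : LangE.Substructure M) (F : M → Option (M × M))

def pinnedTuple : (n : ℕ) → (Fin (n + 1) → Option S) → Option (Fin (n + 1) → M)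
  | 1, t => match t 0, t 1 with
    | none, some y => (F y).map fun p => ![p.1, p.2]
    | _, _ => none
  | _, _ => none

-- `none` is the new point. Non-injective tuples share the label `none`; a tuple from `S`, and
-- `(none, y)` with `F y = some (u, v)`, is labelled by the `E`-class in `M` of the corresponding
-- tuple, resp. of `![u, v]`; every other tuple is labelled by itself.
open Classical in
noncomputable def extLabel (n : ℕ) (t : Fin (n + 1) → Option S) :
    Option ((Fin (n + 1) → Option S) ⊕ Quot (ERel (M := M) n)) :=
  if Injective t then
    some <| if h : ∃ x : Fin (n + 1) → S, t = some ∘ x then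
        .inr (Quot.mk _ (Subtype.val ∘ h.choose))
      else (pinnedTuple S F n t).elim (.inl t) (.inr ∘ Quot.mk _)
  else none

variable {S F}

theorem extLabel_eq_none_iff {n : ℕ} (t : Fin (n + 1) → Option S) :
    extLabel S F n t = none ↔ ¬ Injective t := by
  unfold extLabel
  split_ifs <;> simp [*]

theorem extLabel_comp_some {n : ℕ} (x : Fin (n + 1) → S) :
    extLabel S F n (some ∘ x) = (eClass n (Subtype.val ∘ x)).map .inr := by
  have hx : ∃ x' : Fin (n + 1) → S, some ∘ x = some ∘ x' := ⟨x, rfl⟩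
  have hchoose : hx.choose = x := ((Option.some_injective _).comp_left hx.choose_spec).symm
  have hinj : Injective (some ∘ x) ↔ Injective (Subtype.val ∘ x) :=
    ((Option.some_injective S).of_comp_iff x).trans (Subtype.val_injective.of_comp_iff x).symm
  by_cases h : Injective (Subtype.val ∘ x)
  · simp only [extLabel, eClass, if_pos h, if_pos (hinj.2 h), dif_pos hx, hchoose, Option.map_some]
  · simp only [extLabel, eClass, if_neg h, if_neg (mt hinj.1 h), Option.map_none]

theorem extLabel_pinned {y : S} {u v : M} (hF : F y = some (u, v)) :
    extLabel S F 1 ![none, some y] = some (.inr (Quot.mk _ ![u, v])) := by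
  have hx : ¬ ∃ x : Fin 2 → S, ![none, some y] = some ∘ x := fun ⟨x, hx⟩ => by
    simpa using congrFun hx 0
  have hinj : Injective ![(none : Option S), some y] := injective_pair_iff_ne.2 (by simp)
  simp only [extLabel, if_pos hinj, dif_neg hx]
  simp [pinnedTuple, hF]

theorem extLabel_fresh (x : S) :
    extLabel S F 1 ![some x, none] = some (.inl ![some x, none]) := by
  have hx : ¬ ∃ x' : Fin 2 → S, ![some x, none] = some ∘ x' := fun ⟨x', hx'⟩ => by
    simpa using congrFun hx' 1
  have hinj : Injective ![some x, (none : Option S)] := injective_pair_iff_ne.2 (by simp)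
  simp only [extLabel, if_pos hinj, dif_neg hx]
  simp [pinnedTuple]

end OnePointExtension

theorem exists_extension_point_of_isFraisseLimit {M : Type*} [LangE.Structure M] [Countable M]
    (h : IsFraisseLimit KE M) (S : LangE.Substructure M) (hS : S.FG) (F : M → Option (M × M)) :
    ∃ z ∉ S,
      (∀ y u v : S, (u : M) ≠ v → F y = some ((u : M), (v : M)) → ERel 1 ![z, (y : M)] ![u, v]) ∧
      ∀ x u v : S, ¬ ERel 1 ![(x : M), z] ![u, v] := by
  have hM := isT0Model_of_isFraisseLimit h
  let _ : LangE.Structure (Option S) := structureOfLabels (extLabel S F)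
  have hE {n : ℕ} (a b : Fin (n + 1) → Option S) :
      ERel n a b ↔ extLabel S F n a = extLabel S F n b := eRel_structureOfLabels_iff _ a b
  have : Finite S := (h.age ▸ age.fg_substructure hS : Bundled.mk S ∈ KE).1
  have hB : Bundled.mk (Option S) ∈ LangE.age M := h.age ▸
    ⟨inferInstance, isT0Model_structureOfLabels _ (fun _ => none) fun _ _ => extLabel_eq_none_iff _⟩
  have : Nonempty (Option S ↪[LangE] M) := hB.2
  let g : S ↪[LangE] Option S := embeddingOfERel ⟨some, Option.some_injective _⟩ fun n a b => by
    rw [hE, Embedding.coeFn_mk, extLabel_comp_some, extLabel_comp_some,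
      (Option.map_injective Sum.inr_injective).eq_iff, ← hM.eRel_iff_eClass_eq]
    exact eRel_comp_embedding_iff S.subtype a b
  obtain ⟨f, hf⟩ := h.ultrahomogeneous.extend_embedding ((Substructure.fg_iff_structure_fg S).1 hS)
    S.subtype g
  have hfS (a : S) : f (some a) = a := (DFunLike.congr_fun hf a).symm
  have hold (u v : S) : extLabel S F 1 ![some u, some v] = (eClass 1 ![(u : M), v]).map .inr := by
    rw [← Matrix.comp_vec2, ← Matrix.comp_vec2]
    exact extLabel_comp_some ![u, v]
  have hvec (p q : Option S) : ![f p, f q] = f ∘ ![p, q] := (Matrix.comp_vec2 f p q).symm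
  refine ⟨f none, fun hz => ?_, fun y u v huv hF => ?_, fun x u v hxuv => ?_⟩
  · exact Option.some_ne_none _ (f.injective (hfS ⟨_, hz⟩))
  · rw [← hfS y, ← hfS u, ← hfS v, hvec, hvec, eRel_comp_embedding_iff, hE, extLabel_pinned hF,
      hold, eClass, if_pos (injective_pair_iff_ne.2 huv), Option.map_some]
  · rw [← hfS x, ← hfS u, ← hfS v, hvec, hvec, eRel_comp_embedding_iff, hE, extLabel_fresh, hold,
      eq_comm, Option.map_eq_some_iff] at hxuv
    simp at hxuv

theorem exists_seq_forall_image_range {α : Type*} [DecidableEq α] {P : Finset α → α → Prop}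
    (h : ∀ s, ∃ z, P s z) : ∃ c : ℕ → α, ∀ n, P ((Finset.range n).image c) (c n) := by
  choose g hg using h
  let S : ℕ → Finset α := fun n => Nat.rec ∅ (fun _ s => insert (g s) s) n
  have hS (n : ℕ) : S n = (Finset.range n).image fun k => g (S k) := by
    induction n with
    | zero => rfl
    | succ n ih => rw [Finset.range_add_one, Finset.image_insert, ← ih]
  exact ⟨fun n => g (S n), fun n => hS n ▸ hg (S n)⟩

section FraisseLimit

variable {M : Type*} [LangE.Structure M] [Countable M]

theorem exists_seq_pairwise_not_eRel_of_isFraisseLimit (h : IsFraisseLimit KE M) :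
    ∃ c : ℕ → M, Injective c ∧
      Pairwise fun j k => ¬ ERel 1 ![c (2 * j), c (2 * j + 1)] ![c (2 * k), c (2 * k + 1)] := by
  classical
  obtain ⟨c, hc⟩ := exists_seq_forall_image_range
    (P := fun (s : Finset M) z => z ∉ s ∧ ∀ x ∈ s, ∀ u ∈ s, ∀ v ∈ s, ¬ ERel 1 ![x, z] ![u, v])
    fun s => by
      let S := Substructure.closure LangE (s : Set M)
      have hsS {x : M} (hx : x ∈ s) : x ∈ S := Substructure.subset_closure hx
      obtain ⟨z, hzS, -, hz⟩ := exists_extension_point_of_isFraisseLimit h S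
        (Substructure.fg_closure s.finite_toSet) fun _ => none
      exact ⟨z, fun hzs => hzS (hsS hzs),
        fun x hx u hu v hv => hz ⟨x, hsS hx⟩ ⟨u, hsS hu⟩ ⟨v, hsS hv⟩⟩
  have mem {m n : ℕ} (hmn : m < n) : c m ∈ (Finset.range n).image c :=
    Finset.mem_image_of_mem c (Finset.mem_range.2 hmn)
  refine ⟨c, Injective.of_lt_imp_ne fun m n hmn hc' => (hc n).1 (hc' ▸ mem hmn), ?_⟩
  have hlt {j k : ℕ} (hjk : j < k) :
      ¬ ERel 1 ![c (2 * k), c (2 * k + 1)] ![c (2 * j), c (2 * j + 1)] :=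
    (hc (2 * k + 1)).2 _ (mem (by omega)) _ (mem (by omega)) _ (mem (by omega))
  intro j k hjk
  rcases hjk.lt_or_gt with hjk | hkj
  · exact fun hE => hlt hjk ((isT0Model_of_isFraisseLimit h 1).1.symm hE)
  · exact hlt hkj

theorem exists_forall_eRel_of_isFraisseLimit (h : IsFraisseLimit KE M) {ι : Type*} [Finite ι]
    {y u v : ι → M} (hy : Injective y) (huv : ∀ i, u i ≠ v i) :
    ∃ z, ∀ i, ERel 1 ![z, y i] ![u i, v i] := by
  let S := Substructure.closure LangE (Set.range y ∪ Set.range u ∪ Set.range v)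
  have hyS (i : ι) : y i ∈ S := Substructure.subset_closure (by simp)
  have huS (i : ι) : u i ∈ S := Substructure.subset_closure (by simp)
  have hvS (i : ι) : v i ∈ S := Substructure.subset_closure (by simp)
  obtain ⟨z, -, hz, -⟩ := exists_extension_point_of_isFraisseLimit h S (Substructure.fg_closure
      (((Set.finite_range y).union (Set.finite_range u)).union (Set.finite_range v)))
    (extend y (fun i => some (u i, v i)) fun _ => none)
  exact ⟨z, fun i => hz ⟨y i, hyS i⟩ ⟨u i, huS i⟩ ⟨v i, hvS i⟩ (huv i) (hy.extend_apply _ _ i)⟩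

end FraisseLimit

/-- `T_E` has TP₂, witnessed by `φ(x; y, u, v) = E₂(xy, uv)`: there are a model `M`
of `T_E` and triples `ā^i_j` such that each row `{φ(x, ā^i_j) : j < ω}` is 2-inconsistent while
every vertical path `{φ(x, ā^i_{η(i)}) : i < ω}` is (finitely) consistent. -/
theorem statement8 (ME : Type) [LangE.Structure ME] [Countable ME]
    (h : IsFraisseLimit KE ME) :
    ∃ (M : Type) (_ : LangE.Structure M), (LangE.completeTheory ME).Model M ∧
      ∃ a : ℕ → ℕ → M × M × M,
        (∀ (i : ℕ) (j k : ℕ), j ≠ k →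
          ¬ ∃ x : M, ERel 1 ![x, (a i j).1] ![(a i j).2.1, (a i j).2.2] ∧
            ERel 1 ![x, (a i k).1] ![(a i k).2.1, (a i k).2.2]) ∧
        (∀ (η : ℕ → ℕ) (m : ℕ), ∃ x : M, ∀ i < m,
          ERel 1 ![x, (a i (η i)).1] ![(a i (η i)).2.1, (a i (η i)).2.2]) := by
  have hE := (isT0Model_of_isFraisseLimit h 1).1
  obtain ⟨c, hc, hpairs⟩ := exists_seq_pairwise_not_eRel_of_isFraisseLimit h
  refine ⟨ME, inferInstance, inferInstance, fun i j => (c (2 * i), c (2 * j), c (2 * j + 1)),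
    ?_, ?_⟩
  · rintro i j k hjk ⟨x, hj, hk⟩
    exact hpairs hjk (hE.trans (hE.symm hj) hk)
  · intro η m
    obtain ⟨z, hz⟩ := exists_forall_eRel_of_isFraisseLimit h (ι := Fin m)
      (y := fun i => c (2 * i)) (u := fun i => c (2 * η i)) (v := fun i => c (2 * η i + 1))
      (hc.comp fun i j hij => Fin.ext (by omega)) fun i => hc.ne (by omega)
    exact ⟨z, fun i hi => hz ⟨i, hi⟩⟩
end

section
/- (Adler) Let T be a complete first-order theory in any language and φ(x̄, ȳ) a formula. Then φ has SOP2 in T if and only if φ has TP1 in T. Here φ has SOP2 in T if there exist a model M of T and a family (ā_η)_{η ∈ 2^{<ω}} of ȳ-tuples in M such that for every η ∈ 2^ω and every m < ω, M satisfies ∃x̄ ⋀_{n<m} φ(x̄, ā_{η↾n}), and for all incomparable η, ν ∈ 2^{<ω}, M satisfies ¬∃x̄ (φ(x̄, ā_η) ∧ φ(x̄, ā_ν)); and φ has TP1 in T if the same holds with the binary tree 2^{<ω} replaced by the finitely branching tree ω^{<ω} (and branches η ∈ ω^ω). -/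
/-!
Both sides assert a tree of instances of `φ` that is consistent along branches and inconsistent
at incomparable nodes, and such a tree can be pulled back along any map of trees that reflects
the prefix order and sends each branch into a branch. The binary tree maps coordinatewise into
`ω^{<ω}`, and `ω^{<ω}` maps into the binary tree by the unary code
`n₀ n₁ … n_k ↦ 0^{n₀} 1 0^{n₁} 1 … 0^{n_k} 1`, which is prefix-free and hence reflects prefixes.
-/

universe u v w

namespace TreeProperty

variable {α β : Type*}

/-- `η↾n` -/
def initSeg (η : ℕ → α) (n : ℕ) : List α := List.ofFn fun i : Fin n => η i

@[simp]
lemma length_initSeg (η : ℕ → α) (n : ℕ) : (initSeg η n).length = n := by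
  simp [initSeg]

lemma initSeg_succ (η : ℕ → α) (n : ℕ) : initSeg η (n + 1) = initSeg η n ++ [η n] := by
  rw [initSeg, List.ofFn_succ', List.concat_eq_append]
  rfl

lemma initSeg_prefix_initSeg (η : ℕ → α) {n m : ℕ} (h : n ≤ m) : initSeg η n <+: initSeg η m := by
  induction m, h using Nat.le_induction with
  | base => exact List.prefix_rfl
  | succ m _ ih => exact ih.trans (initSeg_succ η m ▸ List.prefix_append _ _)

lemma exists_eq_initSeg_of_prefix_chain {s : ℕ → List α} (hchain : ∀ {n m}, n ≤ m → s n <+: s m)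
    (hlen : ∀ n, n ≤ (s n).length) : ∃ θ : ℕ → α, ∀ n, s n = initSeg θ (s n).length := by
  refine ⟨fun j => (s (j + 1))[j]'(hlen (j + 1)), fun n => List.ext_getElem (by simp) ?_⟩
  intro j hj _
  simp only [initSeg, List.getElem_ofFn]
  rcases le_total n (j + 1) with h | h
  · exact (hchain h).getElem hj
  · exact ((hchain h).getElem (hlen (j + 1))).symm

section Pattern

variable {L : FirstOrder.Language.{u, v}} {M : Type w} [L.Structure M] {k l : ℕ}

/-- `a` witnesses SOP₂ for `φ` when `α = Bool` and TP₁ when `α = ℕ`. -/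
def IsTreePattern (φ : L.Formula (Fin k ⊕ Fin l)) (a : List α → Fin l → M) : Prop :=
  (∀ (η : ℕ → α) (m : ℕ), ∃ x : Fin k → M, ∀ n < m, φ.Realize (Sum.elim x (a (initSeg η n)))) ∧
  (∀ η ν : List α, ¬ η <+: ν → ¬ ν <+: η →
    ¬ ∃ x : Fin k → M, φ.Realize (Sum.elim x (a η)) ∧ φ.Realize (Sum.elim x (a ν)))

structure IsTreeEmbedding (f : List α → List β) : Prop where
  prefix_of_prefix : ∀ {s t}, f s <+: f t → s <+: t
  exists_branch : ∀ η : ℕ → α, ∃ (θ : ℕ → β) (g : ℕ → ℕ), StrictMono g ∧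
    ∀ n, f (initSeg η n) = initSeg θ (g n)

lemma IsTreeEmbedding.isTreePattern_comp {f : List α → List β} (hf : IsTreeEmbedding f)
    {φ : L.Formula (Fin k ⊕ Fin l)} {a : List β → Fin l → M} (ha : IsTreePattern φ a) :
    IsTreePattern φ (a ∘ f) := by
  obtain ⟨hbranch, hincomp⟩ := ha
  refine ⟨fun η m => ?_, fun η ν hην hνη => ?_⟩
  · obtain ⟨θ, g, hg, hθ⟩ := hf.exists_branch η
    obtain ⟨x, hx⟩ := hbranch θ (g m)
    exact ⟨x, fun n hn => by simpa only [Function.comp_apply, hθ] using hx (g n) (hg hn)⟩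
  · exact hincomp (f η) (f ν) (mt hf.prefix_of_prefix hην) (mt hf.prefix_of_prefix hνη)

end Pattern

lemma isTreeEmbedding_map {f : α → β} (hf : Function.Injective f) :
    IsTreeEmbedding (List.map f) where
  prefix_of_prefix h := (List.prefix_map_iff_of_injective hf).mp h
  exists_branch η := ⟨f ∘ η, id, strictMono_id, fun n => by simp [initSeg, List.map_ofFn]; rfl⟩

def unaryCode (s : List ℕ) : List Bool := s.flatMap fun n => List.replicate n false ++ [true]

@[simp]
lemma unaryCode_cons (n : ℕ) (s : List ℕ) :
    unaryCode (n :: s) = List.replicate n false ++ true :: unaryCode s := by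
  simp [unaryCode]

lemma unaryCode_append (s t : List ℕ) : unaryCode (s ++ t) = unaryCode s ++ unaryCode t :=
  List.flatMap_append

lemma replicate_false_append_true_prefix {m n : ℕ} {u v : List Bool}
    (h : List.replicate m false ++ true :: u <+: List.replicate n false ++ true :: v) :
    m = n ∧ u <+: v := by
  induction m generalizing n with
  | zero => cases n <;> simp_all [List.replicate_succ, List.cons_prefix_cons]
  | succ m ih =>
    cases n with
    | zero => simp [List.replicate_succ, List.cons_prefix_cons] at h
    | succ n =>
      simp only [List.replicate_succ, List.cons_append, List.cons_prefix_cons, true_and] at h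
      simpa using ih h

lemma prefix_of_unaryCode_prefix {s t : List ℕ} (h : unaryCode s <+: unaryCode t) : s <+: t := by
  induction s generalizing t with
  | nil => exact List.nil_prefix
  | cons m s ih =>
    cases t with
    | nil => simp [unaryCode] at h
    | cons n t =>
      obtain ⟨rfl, hst⟩ := replicate_false_append_true_prefix (by simpa using h)
      exact List.cons_prefix_cons.mpr ⟨rfl, ih hst⟩

lemma isTreeEmbedding_unaryCode : IsTreeEmbedding unaryCode where
  prefix_of_prefix := prefix_of_unaryCode_prefix
  exists_branch η := by
    set s := fun n => unaryCode (initSeg η n)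
    have hg : StrictMono fun n => (s n).length := strictMono_nat_of_lt_succ fun n => by
      simp [s, initSeg_succ, unaryCode_append]
    obtain ⟨θ, hθ⟩ := exists_eq_initSeg_of_prefix_chain (s := s)
      (fun h => (initSeg_prefix_initSeg η h).flatMap _) hg.id_le
    exact ⟨θ, _, hg, hθ⟩

end TreeProperty

open TreeProperty

theorem statement10_general (L : FirstOrder.Language.{u, v}) (T : L.Theory)
    (k l : ℕ) (φ : L.Formula (Fin k ⊕ Fin l)) :
    (∃ (M : Type w) (_ : L.Structure M) (_ : T.Model M) (a : List Bool → (Fin l → M)),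
      (∀ (η : ℕ → Bool) (m : ℕ), ∃ x : Fin k → M, ∀ n < m,
        φ.Realize (Sum.elim x (a (List.ofFn (fun i : Fin n => η i))))) ∧
      (∀ η ν : List Bool, ¬ η <+: ν → ¬ ν <+: η →
        ¬ ∃ x : Fin k → M, φ.Realize (Sum.elim x (a η)) ∧ φ.Realize (Sum.elim x (a ν)))) ↔
    (∃ (M : Type w) (_ : L.Structure M) (_ : T.Model M) (a : List ℕ → (Fin l → M)),
      (∀ (η : ℕ → ℕ) (m : ℕ), ∃ x : Fin k → M, ∀ n < m,
        φ.Realize (Sum.elim x (a (List.ofFn (fun i : Fin n => η i))))) ∧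
      (∀ η ν : List ℕ, ¬ η <+: ν → ¬ ν <+: η →
        ¬ ∃ x : Fin k → M, φ.Realize (Sum.elim x (a η)) ∧ φ.Realize (Sum.elim x (a ν)))) := by
  constructor
  · rintro ⟨M, _, hM, a, ha⟩
    exact ⟨M, _, hM, a ∘ unaryCode, isTreeEmbedding_unaryCode.isTreePattern_comp (a := a) ha⟩
  · rintro ⟨M, _, hM, a, ha⟩
    have hinj : Function.Injective Bool.toNat := fun b c h => by cases b <;> cases c <;> simp_all
    exact ⟨M, _, hM, a ∘ List.map Bool.toNat,
      (isTreeEmbedding_map hinj).isTreePattern_comp (a := a) ha⟩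

/-- Adler: for a complete theory `T` and a formula `φ(x̄, ȳ)`, `φ` has SOP₂ in
`T` (witnessed by a binary tree indexed by `2^{<ω}`, i.e. `List Bool`) if and only if `φ` has
TP₁ in `T` (the same with the tree `ω^{<ω}`, i.e. `List ℕ`). -/
theorem statement10 (L : FirstOrder.Language.{u, v}) (T : L.Theory) (hT : T.IsComplete)
    (k l : ℕ) (φ : L.Formula (Fin k ⊕ Fin l)) :
    (∃ (M : Type w) (_ : L.Structure M) (_ : T.Model M) (a : List Bool → (Fin l → M)),
      (∀ (η : ℕ → Bool) (m : ℕ), ∃ x : Fin k → M, ∀ n < m,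
        φ.Realize (Sum.elim x (a (List.ofFn (fun i : Fin n => η i))))) ∧
      (∀ η ν : List Bool, ¬ η <+: ν → ¬ ν <+: η →
        ¬ ∃ x : Fin k → M, φ.Realize (Sum.elim x (a η)) ∧ φ.Realize (Sum.elim x (a ν)))) ↔
    (∃ (M : Type w) (_ : L.Structure M) (_ : T.Model M) (a : List ℕ → (Fin l → M)),
      (∀ (η : ℕ → ℕ) (m : ℕ), ∃ x : Fin k → M, ∀ n < m,
        φ.Realize (Sum.elim x (a (List.ofFn (fun i : Fin n => η i))))) ∧
      (∀ η ν : List ℕ, ¬ η <+: ν → ¬ ν <+: η →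
        ¬ ∃ x : Fin k → M, φ.Realize (Sum.elim x (a η)) ∧ φ.Realize (Sum.elim x (a ν)))) :=
  statement10_general L T k l φ
end

section
/- The class of all L_E-structures satisfying T⁰_E (not only the finite ones) has the amalgamation property and the joint embedding property with respect to L_E-embeddings: any two such structures embed into a common one, and for any structures A, B, C satisfying T⁰_E with embeddings f : A → B and g : A → C there are a structure D satisfying T⁰_E and embeddings f′ : B → D, g′ : C → D with f′ ∘ f = g′ ∘ g. -/
open FirstOrder Language CategoryTheory

universe u

/-!
A `T⁰_E`-structure is the same thing as a labelling of injective tuples: `E_n` relates two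
tuples iff both are non-injective or both are injective with equal labels (`injLabel`), and
every labelling defines a `T⁰_E`-structure in this way. To amalgamate `B ← A → C`, glue the
points as `B ⊔ (C ∖ g A)` and glue the `E_n`-classes in the same way as `Q_B ⊔ (Q_C ∖ g Q_A)`;
the second gluing makes sense because embeddings induce injections on classes. A tuple lying
in `B` or in `C` is labelled by its glued class, a mixed tuple by itself (a fresh class).
Joint embedding is amalgamation over the empty structure.
-/

namespace LangE

open Function Set

abbrev Amalgam {α γ : Type*} (β : Type*) (g : α → γ) : Type _ := β ⊕ {c // c ∉ range g}

section SetAmalgam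

variable {α β γ : Type*} (f : α → β) (g : α → γ)

open Classical in
noncomputable def amalgamMap (c : γ) : Amalgam β g :=
  if h : c ∈ range g then Sum.inl (f h.choose) else Sum.inr ⟨c, h⟩

variable {f g}

theorem amalgamMap_apply (hg : Injective g) (a : α) : amalgamMap f g (g a) = Sum.inl (f a) := by
  have h : g a ∈ range g := mem_range_self a
  rw [amalgamMap, dif_pos h, hg h.choose_spec]

theorem amalgamMap_injective (hf : Injective f) : Injective (amalgamMap f g) := by
  intro c c' h
  unfold amalgamMap at h
  split_ifs at h with hc hc'
  · rw [← hc.choose_spec, ← hc'.choose_spec, hf (Sum.inl_injective h)]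
  · exact congrArg Subtype.val (Sum.inr_injective h)

theorem exists_of_inl_eq_amalgamMap {b : β} {c : γ} (h : Sum.inl b = amalgamMap f g c) :
    ∃ a, f a = b ∧ g a = c := by
  unfold amalgamMap at h
  split_ifs at h with hc
  exact ⟨hc.choose, (Sum.inl_injective h).symm, hc.choose_spec⟩

theorem exists_of_inl_comp_eq_amalgamMap_comp {k : ℕ} {x : Fin k → β} {y : Fin k → γ}
    (h : Sum.inl ∘ x = amalgamMap f g ∘ y) : ∃ a : Fin k → α, f ∘ a = x ∧ g ∘ a = y := by
  choose a hax hay using fun i => exists_of_inl_eq_amalgamMap (congrFun h i)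
  exact ⟨a, funext hax, funext hay⟩

end SetAmalgam

section Labels

variable {M N : Type*}

open Classical in
noncomputable def injLabel {Λ : Type*} {k : ℕ} (lab : (Fin k → M) → Λ) (x : Fin k → M) :
    Option Λ :=
  if Injective x then some (lab x) else none

theorem injLabel_comp {Λ Λ' : Type*} {k : ℕ} {e : M → N} (he : Injective e)
    {lab : (Fin k → M) → Λ} {lab' : (Fin k → N) → Λ'} {φ : Λ → Λ'}
    (h : ∀ x, lab' (e ∘ x) = φ (lab x)) (x : Fin k → M) :
    injLabel lab' (e ∘ x) = Option.map φ (injLabel lab x) := by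
  by_cases hx : Injective x <;> simp [injLabel, he.of_comp_iff, hx, h]

noncomputable abbrev labelStructure {Λ : ℕ → Type*} (lab : ∀ n, (Fin (n + 1) → M) → Λ n) :
    LangE.Structure M where
  funMap F := Empty.elim F
  RelMap r v :=
    injLabel (lab r.1) (fun i => v (Fin.cast r.2.symm (Fin.castAdd _ i))) =
      injLabel (lab r.1) (fun i => v (Fin.cast r.2.symm (Fin.natAdd _ i)))

theorem eRel_labelStructure {Λ : ℕ → Type*} (lab : ∀ n, (Fin (n + 1) → M) → Λ n) {n : ℕ}
    (x y : Fin (n + 1) → M) :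
    @ERel M (labelStructure lab) n x y ↔ injLabel (lab n) x = injLabel (lab n) y := by
  change injLabel (lab n) (fun i => Fin.append x y (Fin.castAdd _ i)) =
    injLabel (lab n) (fun i => Fin.append x y (Fin.natAdd _ i)) ↔ _
  simp only [Fin.append_left, Fin.append_right]

theorem isT0Model_labelStructure {Λ : ℕ → Type*} (lab : ∀ n, (Fin (n + 1) → M) → Λ n) :
    @IsT0Model M (labelStructure lab) := by
  let := labelStructure lab
  intro n
  have hE : ERel (M := M) n = InvImage Eq (injLabel (lab n)) :=
    funext₂ fun x y => propext (eRel_labelStructure lab x y)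
  refine ⟨hE ▸ InvImage.equivalence _ _ ⟨fun _ => rfl, Eq.symm, Eq.trans⟩, fun x y hx => ?_⟩
  simp [eRel_labelStructure, injLabel, hx]

end Labels

section Embeddings

variable {M N : Type*} [LangE.Structure M] [LangE.Structure N]

theorem _root_.Fin.comp_append_s12 {α β : Type*} (e : α → β) {m k : ℕ} (x : Fin m → α)
    (y : Fin k → α) :
    e ∘ Fin.append x y = Fin.append (e ∘ x) (e ∘ y) := by
  funext i
  cases i using Fin.addCases <;> simp

theorem _root_.FirstOrder.Language.Embedding.eRel_comp_iff (e : M ↪[LangE] N) {n : ℕ}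
    (x y : Fin (n + 1) → M) : ERel n (e ∘ x) (e ∘ y) ↔ ERel n x y := by
  rw [ERel, ERel, ← Fin.comp_append_s12, e.map_rel]

theorem relMap_iff_eRel {l : ℕ} (r : LangE.Relations l) (v : Fin l → M) :
    Structure.RelMap r v ↔ ERel r.1 (fun i => v (Fin.cast r.2.symm (Fin.castAdd _ i)))
      (fun i => v (Fin.cast r.2.symm (Fin.natAdd _ i))) := by
  obtain ⟨m, rfl⟩ := r
  rw [ERel, ESym]
  exact Iff.of_eq (congrArg _ Fin.append_castAdd_natAdd.symm)

def embeddingOfERel (e : M → N) (he : Injective e)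
    (h : ∀ n (x y : Fin (n + 1) → M), ERel n (e ∘ x) (e ∘ y) ↔ ERel n x y) : M ↪[LangE] N where
  toFun := e
  inj' := he
  map_fun' F := Empty.elim F
  map_rel' r v := by
    rw [relMap_iff_eRel, relMap_iff_eRel]
    exact h _ _ _

end Embeddings

section TupleClass

variable {M N : Type*} [LangE.Structure M] [LangE.Structure N]

def tupleSetoid (hM : IsT0Model M) (n : ℕ) : Setoid (Fin (n + 1) → M) := ⟨ERel n, (hM n).1⟩

abbrev TupleClass (hM : IsT0Model M) (n : ℕ) : Type _ := Quotient (tupleSetoid hM n)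

def tupleClass (hM : IsT0Model M) (n : ℕ) (x : Fin (n + 1) → M) : TupleClass hM n :=
  Quotient.mk _ x

theorem eRel_iff_injLabel_eq (hM : IsT0Model M) {n : ℕ} (x y : Fin (n + 1) → M) :
    ERel n x y ↔ injLabel (tupleClass hM n) x = injLabel (tupleClass hM n) y := by
  obtain ⟨hequiv, hninj⟩ := hM n
  by_cases hx : Injective x <;> by_cases hy : Injective y <;> simp only [injLabel, hx, hy,
    if_true, if_false, Option.some.injEq, reduceCtorEq, iff_false, iff_true]
  · exact (Quotient.eq (r := tupleSetoid hM n)).symm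
  · exact fun h => (hninj y x hy).1 (hequiv.symm h) hx
  · exact fun h => (hninj x y hx).1 h hy
  · exact (hninj x y hx).2 hy

def tupleClassMap (hM : IsT0Model M) (hN : IsT0Model N) (e : M ↪[LangE] N) (n : ℕ) :
    TupleClass hM n → TupleClass hN n :=
  Quotient.map (e ∘ ·) fun x y => (e.eRel_comp_iff x y).2

theorem tupleClassMap_tupleClass (hM : IsT0Model M) (hN : IsT0Model N) (e : M ↪[LangE] N)
    {n : ℕ} (x : Fin (n + 1) → M) :
    tupleClassMap hM hN e n (tupleClass hM n x) = tupleClass hN n (e ∘ x) :=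
  rfl

theorem tupleClassMap_injective (hM : IsT0Model M) (hN : IsT0Model N) (e : M ↪[LangE] N)
    (n : ℕ) : Injective (tupleClassMap hM hN e n) := by
  rintro ⟨x⟩ ⟨y⟩ h
  exact Quotient.sound ((e.eRel_comp_iff x y).1 (Quotient.exact h))

end TupleClass

noncomputable def labelEmbedding {M N : Type*} [LangE.Structure M] (hM : IsT0Model M)
    {Λ : ℕ → Type*} {lab : ∀ n, (Fin (n + 1) → N) → Λ n} (e : M → N) (he : Injective e)
    (φ : ∀ n, TupleClass hM n → Λ n) (hφ : ∀ n, Injective (φ n))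
    (hlab : ∀ n x, lab n (e ∘ x) = φ n (tupleClass hM n x)) :
    @Embedding LangE M N _ (labelStructure lab) :=
  @embeddingOfERel M N _ (labelStructure lab) e he fun n x y => by
    rw [eRel_labelStructure, eRel_iff_injLabel_eq hM, injLabel_comp he (hlab n),
      injLabel_comp he (hlab n), (Option.map_injective (hφ n)).eq_iff]

section Amalgamation

variable {A B C : Type u} [LangE.Structure A] [LangE.Structure B] [LangE.Structure C]
  (hA : IsT0Model A) (hB : IsT0Model B) (hC : IsT0Model C) (f : A ↪[LangE] B) (g : A ↪[LangE] C)

noncomputable def amalgamLabel (n : ℕ) :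
    (Fin (n + 1) → Amalgam B g) →
      Amalgam (TupleClass hB n) (tupleClassMap hA hC g n) ⊕ (Fin (n + 1) → Amalgam B g) :=
  extend (Sum.inl ∘ ·) (fun x => Sum.inl (Sum.inl (tupleClass hB n x)))
    (extend (amalgamMap f g ∘ ·)
      (fun x => Sum.inl (amalgamMap (tupleClassMap hA hB f n) (tupleClassMap hA hC g n)
        (tupleClass hC n x)))
      Sum.inr)

theorem amalgamLabel_inl_comp (n : ℕ) (x : Fin (n + 1) → B) :
    amalgamLabel hA hB hC f g n (Sum.inl ∘ x) = Sum.inl (Sum.inl (tupleClass hB n x)) :=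
  Sum.inl_injective.comp_left.extend_apply _ _ x

theorem amalgamLabel_amalgamMap_comp (n : ℕ) (x : Fin (n + 1) → C) :
    amalgamLabel hA hB hC f g n (amalgamMap f g ∘ x) =
      Sum.inl (amalgamMap (tupleClassMap hA hB f n) (tupleClassMap hA hC g n)
        (tupleClass hC n x)) := by
  by_cases hinl : ∃ x', Sum.inl ∘ x' = amalgamMap f g ∘ x
  · obtain ⟨x', hx'⟩ := hinl
    obtain ⟨a, rfl, rfl⟩ := exists_of_inl_comp_eq_amalgamMap_comp hx'
    rw [← hx', amalgamLabel_inl_comp, ← tupleClassMap_tupleClass hA hB,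
      ← tupleClassMap_tupleClass hA hC, amalgamMap_apply (tupleClassMap_injective hA hC g n)]
  · rw [amalgamLabel, extend_apply' _ _ _ hinl,
      (amalgamMap_injective f.injective).comp_left.extend_apply]

end Amalgamation

theorem exists_amalgam {A B C : Type u} [LangE.Structure A] [LangE.Structure B]
    [LangE.Structure C] (hA : IsT0Model A) (hB : IsT0Model B) (hC : IsT0Model C)
    (f : A ↪[LangE] B) (g : A ↪[LangE] C) :
    ∃ (D : Type u) (_ : LangE.Structure D), IsT0Model D ∧
      ∃ (f' : B ↪[LangE] D) (g' : C ↪[LangE] D), f'.comp f = g'.comp g := by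
  let := labelStructure (amalgamLabel hA hB hC f g)
  refine ⟨Amalgam B g, _, isT0Model_labelStructure _,
    labelEmbedding hB Sum.inl Sum.inl_injective (fun _ => Sum.inl ∘ Sum.inl)
      (fun _ => Sum.inl_injective.comp Sum.inl_injective) (amalgamLabel_inl_comp hA hB hC f g),
    labelEmbedding hC (amalgamMap f g) (amalgamMap_injective f.injective)
      (fun n => Sum.inl ∘ amalgamMap (tupleClassMap hA hB f n) (tupleClassMap hA hC g n))
      (fun n => Sum.inl_injective.comp (amalgamMap_injective (tupleClassMap_injective hA hB f n)))
      (amalgamLabel_amalgamMap_comp hA hB hC f g), ?_⟩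
  ext a
  exact (amalgamMap_apply g.injective a).symm

noncomputable abbrev pemptyStructure : LangE.Structure PEmpty :=
  labelStructure fun _ _ => ()

noncomputable def pemptyEmbedding (M : Type*) [LangE.Structure M] :
    @Embedding LangE PEmpty M pemptyStructure _ :=
  @embeddingOfERel PEmpty M pemptyStructure _ PEmpty.elim (fun a => a.elim) fun _ x => (x 0).elim

end LangE

open LangE

/-- the class of all `L_E`-structures satisfying `T⁰_E` (not only the finite
ones) has the joint embedding property and the amalgamation property with respect to
`L_E`-embeddings. -/
theorem statement12 :
    (∀ (A B : Type u) (_ : LangE.Structure A) (_ : LangE.Structure B),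
      IsT0Model A → IsT0Model B →
        ∃ (D : Type u) (_ : LangE.Structure D), IsT0Model D ∧
          Nonempty (A ↪[LangE] D) ∧ Nonempty (B ↪[LangE] D)) ∧
    (∀ (A B C : Type u) (_ : LangE.Structure A) (_ : LangE.Structure B)
        (_ : LangE.Structure C),
      IsT0Model A → IsT0Model B → IsT0Model C →
        ∀ (f : A ↪[LangE] B) (g : A ↪[LangE] C),
          ∃ (D : Type u) (_ : LangE.Structure D), IsT0Model D ∧
            ∃ (f' : B ↪[LangE] D) (g' : C ↪[LangE] D), f'.comp f = g'.comp g) := by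
  refine ⟨fun A B _ _ hA hB => ?_, fun A B C _ _ _ hA hB hC f g => exists_amalgam hA hB hC f g⟩
  let := pemptyStructure.{u}
  obtain ⟨D, _, hD, f', g', -⟩ := exists_amalgam (isT0Model_labelStructure _) hA hB
    (pemptyEmbedding A) (pemptyEmbedding B)
  exact ⟨D, _, hD, ⟨f'⟩, ⟨g'⟩⟩
end
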